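/- (Lemma 2.1) Assume ρ > 0, and let ε > 0 and θ > 0 satisfy θ·(β_max − 1)⁺ ≤ 1. Then the function V(x) := exp(εθΨ(−x) + Ψ_ε(x)) satisfies, for every c ∈ [1,∞) as well as for the untruncated drift b (the case c = ∞): ⟨∇V(x), b_c(x,u)⟩ ≤ ε(θρ + (m/(2ε))(1+εθ) − (θ∧1)‖x‖₁)·V(x) for all x ∈ K₀⁻ and all u ∈ Δ, and ⟨∇V(x), b_c(x,u)⟩ ≤ −ε(ρ/m − θρ − θm/2 + θ‖x⁻‖₁)·V(x) for all (x,u) ∈ K₀⁺ × Δ. -/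

import Mathlib

open scoped BigOperators

/-- The piecewise function ψ. -/
noncomputable def psiFn (t : ℝ) : ℝ :=
  if t ≤ -1 then -(1/2)
  else if t ≤ 0 then (t+1)^3 - (1/2)*(t+1)^4 - 1/2
  else t

/-- ψ_ε(t) := ψ(εt). -/
noncomputable def psiE (ε t : ℝ) : ℝ := psiFn (ε * t)

/-- Ψ(x) := Σᵢ ψ(xᵢ)/μᵢ. -/
noncomputable def bigPsi {m : ℕ} (μ : Fin m → ℝ) (x : Fin m → ℝ) : ℝ :=
  ∑ i, psiFn (x i) / μ i

/-- Ψ_ε(x) := Σᵢ ψ_ε(xᵢ)/μᵢ. -/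
noncomputable def bigPsiE {m : ℕ} (μ : Fin m → ℝ) (ε : ℝ) (x : Fin m → ℝ) : ℝ :=
  ∑ i, psiE ε (x i) / μ i

/-- The drift b(x,u) with bᵢ(x,u) = −ρμᵢ/m − μᵢ(xᵢ − ⟨e,x⟩⁺uᵢ) − γᵢ⟨e,x⟩⁺uᵢ. -/
noncomputable def drift {m : ℕ} (ρ : ℝ) (μ γ : Fin m → ℝ) (x u : Fin m → ℝ) :
    Fin m → ℝ :=
  fun i => -(ρ * μ i / m) - μ i * (x i - max (∑ j, x j) 0 * u i)
    - γ i * max (∑ j, x j) 0 * u i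

/-- The extended generator L_u f(x) = Σᵢ λ̃ᵢ ∂²f/∂xᵢ²(x) + ⟨b(x,u), ∇f(x)⟩. -/
noncomputable def genL {m : ℕ} (lam : Fin m → ℝ) (ρ : ℝ) (μ γ : Fin m → ℝ)
    (u : Fin m → ℝ) (f : (Fin m → ℝ) → ℝ) (x : Fin m → ℝ) : ℝ :=
  ∑ i, lam i * fderiv ℝ (fun y => fderiv ℝ f y (Pi.single i 1)) x (Pi.single i 1)
    + fderiv ℝ f x (drift ρ μ γ x u)

/-- ‖x‖₁ = Σᵢ|xᵢ|. -/
noncomputable def norm1 {m : ℕ} (x : Fin m → ℝ) : ℝ := ∑ i, |x i|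

/-- ‖x⁻‖₁ = Σᵢ max(−xᵢ,0). -/
noncomputable def norm1neg {m : ℕ} (x : Fin m → ℝ) : ℝ := ∑ i, max (-(x i)) 0

/-- The truncated drift b_c, with the abandonment term cut off on {xᵢ ≤ c}. -/
noncomputable def driftC {m : ℕ} (ρ : ℝ) (μ γ : Fin m → ℝ) (c : ℝ) (x u : Fin m → ℝ) :
    Fin m → ℝ :=
  fun i => -(ρ * μ i / m) - μ i * (x i - max (∑ j, x j) 0 * u i)
    - (if x i ≤ c then γ i * max (∑ j, x j) 0 * u i else 0)

/-!
`V = exp F` with `F(x) = Σᵢ (εθ ψ(-xᵢ) + ψ(εxᵢ)) / μᵢ` separable, so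
`⟨∇V(x), b⟩ = V(x) Σᵢ dᵢ bᵢ / μᵢ` with `dᵢ = ε ψ'(εxᵢ) - εθ ψ'(-xᵢ)`. From `0 ≤ ψ' ≤ 1`,
`ψ' = 1` on `[0, ∞)` and `s ψ'(-s) ≤ 1/2` for `s ≥ 0`, every `dᵢ` lies in `[-εθ, ε]` and
`-dᵢ xᵢ` is bounded by an affine function of `|xᵢ|`; this is all that is needed on `K₀⁻`, where
`⟨e,x⟩⁺ = 0`. On `K₀⁺` the terms carrying `⟨e,x⟩⁺ uᵢ` contribute at most `ε ⟨e,x⟩ uᵢ` because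
`dᵢ (1 - βᵢ) ≤ ε` when `θ (βᵢ - 1) ≤ 1`, and a coordinate with `xᵢ ≥ 0` has `dᵢ ≥ ε - εθ`,
which produces the `-ρ/m`. The truncated drift is the untruncated one with the smaller rates
`γᵢ 1{xᵢ ≤ c}`.
-/

open Set Finset

theorem hasDerivAt_ite_le {f g : ℝ → ℝ} {a t f' g' : ℝ} (hf : HasDerivAt f f' t)
    (hg : HasDerivAt g g' t) (hfg : f a = g a) (hfg' : t = a → f' = g') :
    HasDerivAt (fun s => if s ≤ a then f s else g s) (if t ≤ a then f' else g') t := by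
  rcases lt_trichotomy t a with hta | rfl | hat
  · rw [if_pos hta.le]
    refine hf.congr_of_eventuallyEq ?_
    filter_upwards [Iio_mem_nhds hta] with s hs
    rw [if_pos (le_of_lt hs)]
  · rw [if_pos le_rfl, ← hasDerivWithinAt_univ, ← Iic_union_Ici (a := t)]
    refine HasDerivWithinAt.union ?_ ?_
    · exact hf.hasDerivWithinAt.congr (fun s hs => if_pos hs) (if_pos le_rfl)
    · rw [hfg' rfl]
      refine hg.hasDerivWithinAt.congr (fun s (hs : t ≤ s) => ?_) (by simp [hfg])
      rcases hs.eq_or_lt with rfl | hs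
      · simp [hfg]
      · simp [not_le.2 hs]
  · rw [if_neg (not_le.2 hat)]
    refine hg.congr_of_eventuallyEq ?_
    filter_upwards [Ioi_mem_nhds hat] with s hs
    rw [if_neg (not_le.2 hs)]

noncomputable def psiDeriv (t : ℝ) : ℝ :=
  if t ≤ -1 then 0 else if t ≤ 0 then 3 * (t + 1) ^ 2 - 2 * (t + 1) ^ 3 else 1

theorem hasDerivAt_psiFn (t : ℝ) : HasDerivAt psiFn (psiDeriv t) t := by
  have hpoly : ∀ s : ℝ, HasDerivAt (fun s : ℝ => (s + 1) ^ 3 - (1 / 2) * (s + 1) ^ 4 - 1 / 2)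
      (3 * (s + 1) ^ 2 - 2 * (s + 1) ^ 3) s := fun s => by
    have h := (hasDerivAt_id' s).add_const (1 : ℝ)
    exact (((h.pow 3).sub ((h.pow 4).const_mul (1 / 2))).sub_const (1 / 2)).congr_deriv
      (by push_cast; ring)
  have hinner := hasDerivAt_ite_le (a := 0) (hpoly t) (hasDerivAt_id t) (by norm_num)
    (fun h => by subst h; norm_num)
  exact hasDerivAt_ite_le (a := -1) (hasDerivAt_const t (-(1 / 2))) hinner (by norm_num)
    (fun h => by subst h; norm_num)

theorem psiDeriv_nonneg (t : ℝ) : 0 ≤ psiDeriv t := by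
  unfold psiDeriv
  split_ifs
  · exact le_rfl
  · nlinarith [sq_nonneg (t + 1)]
  · exact zero_le_one

theorem psiDeriv_le_one (t : ℝ) : psiDeriv t ≤ 1 := by
  unfold psiDeriv
  split_ifs
  · exact zero_le_one
  · nlinarith [mul_nonneg (sq_nonneg t) (by linarith : (0 : ℝ) ≤ 3 + 2 * t)]
  · exact le_rfl

theorem psiDeriv_of_nonneg {t : ℝ} (ht : 0 ≤ t) : psiDeriv t = 1 := by
  unfold psiDeriv
  rw [if_neg (by linarith)]
  split_ifs with h
  · rw [le_antisymm h ht]; norm_num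
  · rfl

theorem psiDeriv_neg_mul_le {s : ℝ} (hs : 0 ≤ s) : psiDeriv (-s) * s ≤ 1 / 2 := by
  unfold psiDeriv
  split_ifs
  · linarith
  · -- on `0 ≤ s < 1` the left side is `s (1 - s)² (1 + 2s)`
    nlinarith [sq_nonneg (2 * s - 1), sq_nonneg (2 * s ^ 2 - s),
      mul_nonneg (mul_nonneg hs hs) (by linarith : (0 : ℝ) ≤ 1 - s)]
  · linarith

noncomputable def potentialDeriv (ε θ t : ℝ) : ℝ :=
  ε * psiDeriv (ε * t) - ε * θ * psiDeriv (-t)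

theorem hasDerivAt_potential (ε θ t : ℝ) :
    HasDerivAt (fun s => ε * θ * psiFn (-s) + psiFn (ε * s)) (potentialDeriv ε θ t) t := by
  have hneg := (hasDerivAt_psiFn (-t)).comp t (hasDerivAt_neg t)
  have hmul := (hasDerivAt_psiFn (ε * t)).comp t ((hasDerivAt_id t).const_mul ε)
  exact ((hneg.const_mul (ε * θ)).add hmul).congr_deriv (by simp [potentialDeriv]; ring)

theorem fderiv_exp_potential_apply {m : ℕ} (μ : Fin m → ℝ) (ε θ : ℝ) (x v : Fin m → ℝ) :
    fderiv ℝ (fun y => Real.exp (ε * θ * bigPsi μ (-y) + bigPsiE μ ε y)) x v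
      = (∑ i, potentialDeriv ε θ (x i) / μ i * v i)
        * Real.exp (ε * θ * bigPsi μ (-x) + bigPsiE μ ε x) := by
  have hsplit : (fun y => ε * θ * bigPsi μ (-y) + bigPsiE μ ε y)
      = fun y : Fin m → ℝ => ∑ i, (ε * θ * psiFn (-y i) + psiFn (ε * y i)) / μ i := by
    funext y
    simp only [bigPsi, bigPsiE, psiE, Pi.neg_apply, mul_sum, ← sum_add_distrib, add_div,
      mul_div_assoc]
  have hexponent : HasFDerivAt (fun y => ε * θ * bigPsi μ (-y) + bigPsiE μ ε y)
      (∑ i, (potentialDeriv ε θ (x i) / μ i) •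
        ContinuousLinearMap.proj (R := ℝ) (φ := fun _ : Fin m => ℝ) i) x := by
    rw [hsplit]
    refine HasFDerivAt.fun_sum fun i _ => ?_
    have hcoord : HasFDerivAt (fun y : Fin m → ℝ => y i)
        (ContinuousLinearMap.proj (R := ℝ) (φ := fun _ : Fin m => ℝ) i) x :=
      hasFDerivAt_apply i x
    exact ((hasDerivAt_potential ε θ (x i)).div_const (μ i)).comp_hasFDerivAt x hcoord
  rw [hexponent.exp.fderiv]
  simp [mul_comm]

section PotentialDerivBounds

variable {ε θ : ℝ} (hε : 0 ≤ ε) (hθ : 0 ≤ θ)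
include hε hθ

theorem potentialDeriv_le (t : ℝ) : potentialDeriv ε θ t ≤ ε := by
  unfold potentialDeriv
  nlinarith [psiDeriv_le_one (ε * t), psiDeriv_nonneg (-t), mul_nonneg hε hθ]

theorem neg_mul_le_potentialDeriv (t : ℝ) : -(ε * θ) ≤ potentialDeriv ε θ t := by
  unfold potentialDeriv
  nlinarith [psiDeriv_nonneg (ε * t), psiDeriv_le_one (-t), mul_nonneg hε hθ]

theorem sub_le_potentialDeriv_of_nonneg {t : ℝ} (ht : 0 ≤ t) :
    ε - ε * θ ≤ potentialDeriv ε θ t := by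
  unfold potentialDeriv
  rw [psiDeriv_of_nonneg (mul_nonneg hε ht)]
  nlinarith [psiDeriv_le_one (-t), mul_nonneg hε hθ]

theorem neg_potentialDeriv_mul_le_abs (t : ℝ) :
    -(potentialDeriv ε θ t * t) ≤ (1 + ε * θ) / 2 - ε * min θ 1 * |t| := by
  unfold potentialDeriv
  rcases le_total 0 t with ht | ht
  · rw [abs_of_nonneg ht, psiDeriv_of_nonneg (mul_nonneg hε ht)]
    nlinarith [psiDeriv_neg_mul_le ht, mul_nonneg hε hθ, min_le_right θ 1, mul_nonneg hε ht]
  · rw [abs_of_nonpos ht, psiDeriv_of_nonneg (neg_nonneg.2 ht)]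
    have h := psiDeriv_neg_mul_le (mul_nonneg hε (neg_nonneg.2 ht))
    rw [mul_neg, neg_neg] at h
    nlinarith [min_le_left θ 1, mul_nonneg hε (neg_nonneg.2 ht)]

theorem neg_potentialDeriv_mul_le (t : ℝ) :
    -(potentialDeriv ε θ t * t) ≤ ε * θ / 2 - ε * max t 0 + ε * (1 - θ) * max (-t) 0 := by
  unfold potentialDeriv
  rcases le_total 0 t with ht | ht
  · rw [max_eq_left ht, max_eq_right (neg_nonpos.2 ht), psiDeriv_of_nonneg (mul_nonneg hε ht)]
    nlinarith [psiDeriv_neg_mul_le ht, mul_nonneg hε hθ]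
  · rw [max_eq_right ht, max_eq_left (neg_nonneg.2 ht), psiDeriv_of_nonneg (neg_nonneg.2 ht)]
    nlinarith [psiDeriv_le_one (ε * t), mul_nonneg hε (neg_nonneg.2 ht), mul_nonneg hε hθ]

theorem potentialDeriv_mul_one_sub_le {β : ℝ} (hβ : 0 ≤ β) (hθβ : θ * (β - 1) ≤ 1) (t : ℝ) :
    potentialDeriv ε θ t * (1 - β) ≤ ε := by
  have hle := potentialDeriv_le hε hθ t
  have hge := neg_mul_le_potentialDeriv hε hθ t
  rcases le_total β 1 with hβ1 | hβ1
  · nlinarith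
  · nlinarith [mul_le_mul_of_nonneg_left hθβ hε]

end PotentialDerivBounds

section DriftBounds

variable {m : ℕ} {ρ ε θ : ℝ} {μ a x u : Fin m → ℝ}

theorem div_mul_drift_eq {i : Fin m} (hμ : μ i ≠ 0) (d : ℝ) :
    d / μ i * drift ρ μ a x u i
      = -(d * (ρ / m)) - d * x i + max (∑ j, x j) 0 * u i * (d * (1 - a i / μ i)) := by
  unfold drift
  field_simp
  ring

theorem le_sum_potentialDeriv_of_nonneg (hε : 0 ≤ ε) (hθ : 0 ≤ θ) {i₀ : Fin m} (hi₀ : 0 ≤ x i₀) :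
    ε - m * (ε * θ) ≤ ∑ i, potentialDeriv ε θ (x i) := by
  have hshift : ε ≤ ∑ i, (potentialDeriv ε θ (x i) + ε * θ) :=
    calc ε ≤ potentialDeriv ε θ (x i₀) + ε * θ := by
          linarith [sub_le_potentialDeriv_of_nonneg hε hθ hi₀]
      _ ≤ ∑ i, (potentialDeriv ε θ (x i) + ε * θ) :=
          single_le_sum (f := fun i => potentialDeriv ε θ (x i) + ε * θ)
            (fun i _ => by linarith [neg_mul_le_potentialDeriv hε hθ (x i)]) (mem_univ i₀)
  rw [sum_add_distrib, sum_const, card_univ, Fintype.card_fin, nsmul_eq_mul] at hshift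
  linarith

theorem sum_potentialDeriv_mul_drift_le_of_sum_nonpos (hm : m ≠ 0) (hρ : 0 ≤ ρ)
    (hμ : ∀ i, μ i ≠ 0) (hε : 0 < ε) (hθ : 0 ≤ θ) (hx : ∑ i, x i ≤ 0) :
    ∑ i, potentialDeriv ε θ (x i) / μ i * drift ρ μ a x u i
      ≤ ε * (θ * ρ + (m / (2 * ε)) * (1 + ε * θ) - min θ 1 * norm1 x) := by
  have hρm : 0 ≤ ρ / m := by positivity
  calc ∑ i, potentialDeriv ε θ (x i) / μ i * drift ρ μ a x u i
      = ∑ i, (-(potentialDeriv ε θ (x i) * (ρ / m)) - potentialDeriv ε θ (x i) * x i) := by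
        simp only [div_mul_drift_eq (hμ _), max_eq_right hx, zero_mul, add_zero]
    _ ≤ ∑ i, (ε * θ * (ρ / m) + ((1 + ε * θ) / 2 - ε * min θ 1 * |x i|)) := by
        refine sum_le_sum fun i _ => ?_
        have hρterm := mul_le_mul_of_nonneg_right (neg_mul_le_potentialDeriv hε.le hθ (x i)) hρm
        linarith [neg_potentialDeriv_mul_le_abs hε.le hθ (x i)]
    _ = ε * (θ * ρ + (m / (2 * ε)) * (1 + ε * θ) - min θ 1 * norm1 x) := by
        simp only [sum_add_distrib, sum_sub_distrib, sum_const, card_univ, Fintype.card_fin,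
          nsmul_eq_mul, ← mul_sum, norm1]
        field_simp
        ring

theorem sum_potentialDeriv_mul_drift_le_of_sum_nonneg (hm : m ≠ 0) (hρ : 0 ≤ ρ)
    (hμ : ∀ i, μ i ≠ 0) (ha : ∀ i, 0 ≤ a i / μ i) (hε : 0 < ε) (hθ : 0 ≤ θ)
    (hθa : ∀ i, θ * (a i / μ i - 1) ≤ 1) (hu : u ∈ stdSimplex ℝ (Fin m))
    (hx : 0 ≤ ∑ i, x i) :
    ∑ i, potentialDeriv ε θ (x i) / μ i * drift ρ μ a x u i
      ≤ -(ε * (ρ / m - θ * ρ - θ * m / 2 + θ * norm1neg x)) := by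
  obtain ⟨i₀, hi₀⟩ : ∃ i₀, 0 ≤ x i₀ := by
    by_contra! h
    exact (sum_neg (fun i _ => h i) (univ_nonempty_iff.2 ⟨⟨0, Nat.pos_of_ne_zero hm⟩⟩)).not_ge hx
  have hρm : 0 ≤ ρ / m := by positivity
  have hdrift :
      ∑ i, (∑ j, x j) * u i * (potentialDeriv ε θ (x i) * (1 - a i / μ i)) ≤ ε * ∑ j, x j :=
    calc ∑ i, (∑ j, x j) * u i * (potentialDeriv ε θ (x i) * (1 - a i / μ i))
        ≤ ∑ i, (∑ j, x j) * u i * ε := by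
          gcongr with i
          · exact mul_nonneg hx (hu.1 i)
          · exact potentialDeriv_mul_one_sub_le hε.le hθ (ha i) (hθa i) (x i)
      _ = ε * ∑ j, x j := by rw [← sum_mul, ← mul_sum, hu.2]; ring
  have hsplit : ∑ j, x j = ∑ i, max (x i) 0 - norm1neg x := by
    simp only [norm1neg, ← sum_sub_distrib, max_zero_sub_max_neg_zero_eq_self]
  calc ∑ i, potentialDeriv ε θ (x i) / μ i * drift ρ μ a x u i
      = -((ρ / m) * ∑ i, potentialDeriv ε θ (x i)) + ∑ i, -(potentialDeriv ε θ (x i) * x i)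
          + ∑ i, (∑ j, x j) * u i * (potentialDeriv ε θ (x i) * (1 - a i / μ i)) := by
        simp only [div_mul_drift_eq (hμ _), max_eq_left hx, mul_sum, ← sum_add_distrib,
          ← sum_neg_distrib]
        exact sum_congr rfl fun i _ => by ring
    _ ≤ -((ρ / m) * (ε - m * (ε * θ)))
          + ∑ i, (ε * θ / 2 - ε * max (x i) 0 + ε * (1 - θ) * max (-x i) 0) + ε * ∑ j, x j := by
        refine add_le_add (add_le_add ?_ ?_) hdrift
        · exact neg_le_neg
            (mul_le_mul_of_nonneg_left (le_sum_potentialDeriv_of_nonneg hε.le hθ hi₀) hρm)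
        · exact sum_le_sum fun i _ => neg_potentialDeriv_mul_le hε.le hθ (x i)
    _ = -(ε * (ρ / m - θ * ρ - θ * m / 2 + θ * norm1neg x)) := by
        simp only [sum_add_distrib, sum_sub_distrib, sum_const, card_univ, Fintype.card_fin,
          nsmul_eq_mul, ← mul_sum, hsplit, norm1neg]
        field_simp
        ring

end DriftBounds

theorem fderiv_exp_potential_drift_le {m : ℕ} {ρ ε θ : ℝ} {μ a x u : Fin m → ℝ} (hm : m ≠ 0)
    (hρ : 0 ≤ ρ) (hμ : ∀ i, 0 < μ i) (ha : ∀ i, 0 ≤ a i) (hε : 0 < ε) (hθ : 0 ≤ θ)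
    (hθa : ∀ i, θ * (a i / μ i - 1) ≤ 1) (hu : u ∈ stdSimplex ℝ (Fin m)) :
    ((∑ i, x i) ≤ 0 →
      fderiv ℝ (fun y => Real.exp (ε * θ * bigPsi μ (-y) + bigPsiE μ ε y)) x (drift ρ μ a x u)
        ≤ ε * (θ * ρ + (m / (2 * ε)) * (1 + ε * θ) - min θ 1 * norm1 x)
            * Real.exp (ε * θ * bigPsi μ (-x) + bigPsiE μ ε x)) ∧
    (0 ≤ ∑ i, x i →
      fderiv ℝ (fun y => Real.exp (ε * θ * bigPsi μ (-y) + bigPsiE μ ε y)) x (drift ρ μ a x u)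
        ≤ -(ε * (ρ / m - θ * ρ - θ * m / 2 + θ * norm1neg x))
            * Real.exp (ε * θ * bigPsi μ (-x) + bigPsiE μ ε x)) := by
  have hμ' : ∀ i, μ i ≠ 0 := fun i => (hμ i).ne'
  rw [fderiv_exp_potential_apply]
  exact ⟨fun hx => mul_le_mul_of_nonneg_right
      (sum_potentialDeriv_mul_drift_le_of_sum_nonpos hm hρ hμ' hε hθ hx) (Real.exp_pos _).le,
    fun hx => mul_le_mul_of_nonneg_right
      (sum_potentialDeriv_mul_drift_le_of_sum_nonneg hm hρ hμ'
        (fun i => div_nonneg (ha i) (hμ i).le) hε hθ hθa hu hx) (Real.exp_pos _).le⟩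

theorem driftC_eq_drift {m : ℕ} (ρ : ℝ) (μ γ : Fin m → ℝ) (c : ℝ) (x u : Fin m → ℝ) :
    driftC ρ μ γ c x u = drift ρ μ (fun i => if x i ≤ c then γ i else 0) x u := by
  funext i
  simp only [driftC, drift]
  split_ifs <;> ring

/-- Lemma 2.1: drift inequalities for V(x) = exp(εθΨ(−x)+Ψ_ε(x)),
for every truncation level c ∈ [1,∞) and also for the untruncated drift. -/
theorem stmt5 {m : ℕ} (hm : 1 ≤ m) (ρ : ℝ) (hρ : 0 < ρ) (μ γ : Fin m → ℝ)
    (hμ : ∀ i, 0 < μ i) (hγ : ∀ i, 0 ≤ γ i) (βmax : ℝ)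
    (hβmax : IsGreatest (Set.range fun i => γ i / μ i) βmax)
    (ε θ : ℝ) (hε : 0 < ε) (hθ : 0 < θ) (hθβ : θ * max (βmax - 1) 0 ≤ 1) :
    (∀ c : ℝ, 1 ≤ c → ∀ x u : Fin m → ℝ, u ∈ stdSimplex ℝ (Fin m) →
      ((∑ i, x i) ≤ 0 →
        fderiv ℝ (fun y => Real.exp (ε * θ * bigPsi μ (-y) + bigPsiE μ ε y)) x
            (driftC ρ μ γ c x u)
          ≤ ε * (θ * ρ + (m / (2 * ε)) * (1 + ε * θ) - min θ 1 * norm1 x)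
              * Real.exp (ε * θ * bigPsi μ (-x) + bigPsiE μ ε x)) ∧
      (0 ≤ ∑ i, x i →
        fderiv ℝ (fun y => Real.exp (ε * θ * bigPsi μ (-y) + bigPsiE μ ε y)) x
            (driftC ρ μ γ c x u)
          ≤ -(ε * (ρ / m - θ * ρ - θ * m / 2 + θ * norm1neg x))
              * Real.exp (ε * θ * bigPsi μ (-x) + bigPsiE μ ε x))) ∧
    (∀ x u : Fin m → ℝ, u ∈ stdSimplex ℝ (Fin m) →
      ((∑ i, x i) ≤ 0 →
        fderiv ℝ (fun y => Real.exp (ε * θ * bigPsi μ (-y) + bigPsiE μ ε y)) x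
            (drift ρ μ γ x u)
          ≤ ε * (θ * ρ + (m / (2 * ε)) * (1 + ε * θ) - min θ 1 * norm1 x)
              * Real.exp (ε * θ * bigPsi μ (-x) + bigPsiE μ ε x)) ∧
      (0 ≤ ∑ i, x i →
        fderiv ℝ (fun y => Real.exp (ε * θ * bigPsi μ (-y) + bigPsiE μ ε y)) x
            (drift ρ μ γ x u)
          ≤ -(ε * (ρ / m - θ * ρ - θ * m / 2 + θ * norm1neg x))
              * Real.exp (ε * θ * bigPsi μ (-x) + bigPsiE μ ε x))) := by
  have hθrate : ∀ a : Fin m → ℝ, (∀ i, a i ≤ γ i) → ∀ i, θ * (a i / μ i - 1) ≤ 1 :=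
    fun a ha i => calc
      θ * (a i / μ i - 1) ≤ θ * max (βmax - 1) 0 := by
        gcongr
        refine le_max_of_le_left (sub_le_sub_right ?_ 1)
        exact (div_le_div_of_nonneg_right (ha i) (hμ i).le).trans (hβmax.2 ⟨i, rfl⟩)
      _ ≤ 1 := hθβ
  refine ⟨fun c _ x u hu => ?_, fun x u hu => ?_⟩
  · rw [driftC_eq_drift]
    refine fderiv_exp_potential_drift_le (by omega) hρ.le hμ (fun i => ?_) hε hθ.le
      (hθrate _ fun i => ?_) hu <;> split_ifs <;> simp [hγ i]
  · exact fderiv_exp_potential_drift_le (by omega) hρ.le hμ hγ hε hθ.le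
      (hθrate γ fun _ => le_rfl) hu
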